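/- arXiv:1810.02686 — 2 statements merged into one kernel-verified Lean document; each statement's English description precedes it below -/
import Mathlib

section
/- Let X be a compact Hausdorff space, u ≠ v points of X, and let 𝒜 be a unital subalgebra of C(X,ℝ) that separates points. For any real numbers a, b (possibly equal), the set {f ∈ 𝒜 : f(u) = a, f(v) = b} is dense in {f ∈ C(X,ℝ) : f(u) = a, f(v) = b} with respect to the sup norm. -/
/-!
Stone–Weierstrass makes `A` dense in `C(X, ℝ)`. Pick `e₁, e₂ ∈ A` with `e₁ u = 1`, `e₁ v = 0`,
`e₂ u = 0`, `e₂ v = 1`. The map `g ↦ g + (a - g u) • e₁ + (b - g v) • e₂` is continuous, sends `A`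
into `A` with the prescribed values at `u` and `v`, and fixes every `f` that already has them;
so it carries the density of `A` over to the constrained sets.
-/

namespace Subalgebra

variable {𝕜 X : Type*} [Field 𝕜] [TopologicalSpace 𝕜] [IsTopologicalRing 𝕜] [TopologicalSpace X]
  {A : Subalgebra 𝕜 C(X, 𝕜)}

theorem SeparatesPoints.exists_mem_apply_eq_one_apply_eq_zero (hA : A.SeparatesPoints) {x y : X}
    (hxy : x ≠ y) : ∃ e ∈ A, e x = 1 ∧ e y = 0 := by
  classical
  obtain ⟨e, heA, hex, hey⟩ := hA.strongly (fun z => if z = x then 1 else 0) x y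
  exact ⟨e, heA, by simpa using hex, by simpa [hxy.symm] using hey⟩

theorem SeparatesPoints.closure_inter_subset_closure_apply_eq (hA : A.SeparatesPoints) {x y : X}
    (hxy : x ≠ y) (a b : 𝕜) :
    closure (A : Set C(X, 𝕜)) ∩ {f | f x = a ∧ f y = b} ⊆
      closure {f : C(X, 𝕜) | f ∈ A ∧ f x = a ∧ f y = b} := by
  obtain ⟨e₁, he₁A, he₁x, he₁y⟩ := hA.exists_mem_apply_eq_one_apply_eq_zero hxy
  obtain ⟨e₂, he₂A, he₂y, he₂x⟩ := hA.exists_mem_apply_eq_one_apply_eq_zero hxy.symm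
  let correct : C(X, 𝕜) → C(X, 𝕜) := fun g => g + (a - g x) • e₁ + (b - g y) • e₂
  have hcont : Continuous correct := by fun_prop
  have hmaps : Set.MapsTo correct A {f | f ∈ A ∧ f x = a ∧ f y = b} := fun g hg =>
    ⟨A.add_mem (A.add_mem hg (A.smul_mem he₁A _)) (A.smul_mem he₂A _),
      by simp [correct, he₁x, he₂x], by simp [correct, he₁y, he₂y]⟩
  rintro f ⟨hf, hfx, hfy⟩
  have hfix : correct f = f := by simp [correct, hfx, hfy]
  simpa [hfix] using map_mem_closure hcont hf hmaps

end Subalgebra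

theorem stmt10_general (X : Type*) [TopologicalSpace X] [CompactSpace X]
    (u v : X) (huv : u ≠ v) (A : Subalgebra ℝ C(X, ℝ)) (hA : A.SeparatesPoints)
    (a b : ℝ) :
    {f : C(X, ℝ) | f u = a ∧ f v = b} ⊆
      closure {f : C(X, ℝ) | f ∈ A ∧ f u = a ∧ f v = b} := by
  intro f hf
  exact hA.closure_inter_subset_closure_apply_eq huv a b
    ⟨ContinuousMap.continuousMap_mem_subalgebra_closure_of_separatesPoints A hA f, hf⟩

theorem stmt10 (X : Type*) [TopologicalSpace X] [CompactSpace X] [T2Space X]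
    (u v : X) (huv : u ≠ v) (A : Subalgebra ℝ C(X, ℝ)) (hA : A.SeparatesPoints)
    (a b : ℝ) :
    {f : C(X, ℝ) | f u = a ∧ f v = b} ⊆
      closure {f : C(X, ℝ) | f ∈ A ∧ f u = a ∧ f v = b} :=
  stmt10_general X u v huv A hA a b
end

section
/- Fix q ∈ S¹ with lift q̃ ∈ [0,1) and m ∈ ℤ. The set P_m^q(S¹,S¹) of continuous f : S¹ → S¹ whose lift f̃_α is a polynomial with f̃_α(0) = q̃ and f̃_α(1) = q̃ + m is dense, in the metric d₀, in C_m^q(S¹,S¹) = {f ∈ C(S¹,S¹) : f((1,0)) = q, W(f) = m}. -/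
/-!
Approximate the lift `f̃_α` uniformly by a polynomial (Weierstrass) and correct it by an affine
term so that it takes the values `q̃` and `q̃ + m` at the endpoints. Since these differ by an
integer, `p ∘ P` closes up to a continuous self-map `g` of the circle with `g ∘ α = p ∘ P`.
The lift of `g` and `P` then cover the same path and agree at `0` (both lie in `[0,1)` over `q`),
so by uniqueness of lifts `g̃_α = P`.
-/

open Real unitInterval

/-- The exponential covering map `p(t) = (cos 2πt, sin 2πt)`, with the unit circle
realized as the unit circle `Circle` in `ℂ`. -/
noncomputable def p (t : ℝ) : Circle := Circle.exp (2 * π * t)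

/-- The loop `α : [0,1] → S¹`, `α(t) = (cos 2πt, sin 2πt)`. -/
noncomputable def α (t : unitInterval) : Circle := p t

open Polynomial

lemma p_eq_p_iff {a b : ℝ} : p a = p b ↔ ∃ n : ℤ, a = b + n := by
  have h2π : (2 * π) ≠ 0 := by positivity
  simp only [p, Circle.exp_eq_exp]
  refine exists_congr fun n => ⟨fun h => mul_left_cancel₀ h2π ?_, fun h => ?_⟩
  · rw [h]; ring
  · rw [h]; ring

lemma p_add_intCast (x : ℝ) (n : ℤ) : p (x + n) = p x :=
  p_eq_p_iff.mpr ⟨n, rfl⟩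

lemma p_zero : p 0 = 1 := by
  simp [p]

lemma eq_of_p_eq_of_mem_Ico {a b : ℝ} (ha : a ∈ Set.Ico (0 : ℝ) 1) (hb : b ∈ Set.Ico (0 : ℝ) 1)
    (h : p a = p b) : a = b := by
  obtain ⟨n, hn⟩ := p_eq_p_iff.mp h
  have hn0 : n = 0 := by
    have : |(n : ℝ)| < 1 := by
      rw [abs_lt]; constructor <;> linarith [ha.1, ha.2, hb.1, hb.2]
    exact_mod_cast Int.abs_lt_one_iff.mp (by exact_mod_cast this : |n| < 1)
  simpa [hn0] using hn

lemma homeomorphCircle_one_coe (x : ℝ) :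
    AddCircle.homeomorphCircle one_ne_zero (x : AddCircle (1 : ℝ)) = p x := by
  rw [AddCircle.homeomorphCircle_apply, AddCircle.toCircle_apply_mk, div_one, p]

lemma eq_of_p_comp_eq {X : Type*} [TopologicalSpace X] [PreconnectedSpace X] {ℓ₁ ℓ₂ : X → ℝ}
    (h₁ : Continuous ℓ₁) (h₂ : Continuous ℓ₂) (he : ∀ x, p (ℓ₁ x) = p (ℓ₂ x))
    (x₀ : X) (h₀ : ℓ₁ x₀ = ℓ₂ x₀) : ℓ₁ = ℓ₂ := by
  have h2π : (2 * π) ≠ 0 := by positivity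
  have key : (fun x => 2 * π * ℓ₁ x) = fun x => 2 * π * ℓ₂ x :=
    Circle.isCoveringMap_exp.eq_of_comp_eq (continuous_const.mul h₁) (continuous_const.mul h₂)
      (funext he) x₀ (by rw [h₀])
  exact funext fun x => mul_left_cancel₀ h2π (congrFun key x)

lemma exists_continuousMap_circle_comp_p {φ : ℝ → ℝ} (hφ : ContinuousOn φ (Set.Icc 0 1))
    {m : ℤ} (hm : φ 1 = φ 0 + m) :
    ∃ g : C(Circle, Circle), ∀ t ∈ Set.Icc (0 : ℝ) 1, g (p t) = p (φ t) := by
  let e := AddCircle.homeomorphCircle (one_ne_zero : (1 : ℝ) ≠ 0)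
  have hclosed : p (φ 0) = p (φ 1) := by rw [hm, p_add_intCast]
  have hcont : Continuous (AddCircle.liftIco 1 0 (p ∘ φ)) :=
    AddCircle.liftIco_zero_continuous hclosed
      ((Circle.exp.continuous.comp (continuous_const_mul (2 * π))).comp_continuousOn hφ)
  let g : C(Circle, Circle) :=
    ⟨AddCircle.liftIco 1 0 (p ∘ φ) ∘ e.symm, hcont.comp e.symm.continuous⟩
  have hIco : ∀ t ∈ Set.Ico (0 : ℝ) 1, g (p t) = p (φ t) := fun t ht => by
    change AddCircle.liftIco 1 0 (p ∘ φ) (e.symm (p t)) = _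
    rw [← homeomorphCircle_one_coe, Homeomorph.symm_apply_apply]
    exact AddCircle.liftIco_zero_coe_apply ht
  refine ⟨g, fun t ht => ?_⟩
  rcases ht.2.lt_or_eq with ht1 | rfl
  · exact hIco t ⟨ht.1, ht1⟩
  · rw [← hclosed, ← zero_add (1 : ℝ), ← Int.cast_one, p_add_intCast]
    exact hIco 0 ⟨le_rfl, one_pos⟩

lemma exists_polynomial_near_of_eval_zero_of_eval_one (f : C(I, ℝ)) {ε : ℝ} (hε : 0 < ε) :
    ∃ P : ℝ[X], P.eval 0 = f 0 ∧ P.eval 1 = f 1 ∧ ∀ t : I, |f t - P.eval (t : ℝ)| < ε := by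
  obtain ⟨P₀, hP₀⟩ := exists_polynomial_near_continuousMap 0 1 f (ε / 2) (half_pos hε)
  rw [ContinuousMap.norm_lt_iff _ (half_pos hε)] at hP₀
  have hnear : ∀ t : I, |f t - P₀.eval (t : ℝ)| < ε / 2 := fun t => by
    rw [abs_sub_comm]; exact hP₀ t
  set e₀ := f 0 - P₀.eval 0
  set e₁ := f 1 - P₀.eval 1
  have he₀ : |e₀| < ε / 2 := by simpa using hnear 0
  have he₁ : |e₁| < ε / 2 := by simpa using hnear 1
  refine ⟨P₀ + C e₀ * (1 - X) + C e₁ * X, by simp [e₀], by simp [e₁], fun t => ?_⟩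
  -- a convex combination of the two endpoint errors
  have hcorr : |e₀ * (1 - t) + e₁ * t| ≤ ε / 2 := by
    have ht₀ := t.2.1
    have ht₁ := t.2.2
    rw [abs_lt] at he₀ he₁
    rw [abs_le]; constructor <;> nlinarith
  calc |f t - (P₀ + C e₀ * (1 - X) + C e₁ * X).eval (t : ℝ)|
      = |(f t - P₀.eval (t : ℝ)) - (e₀ * (1 - t) + e₁ * t)| := by
        simp only [eval_add, eval_mul, eval_C, eval_sub, eval_one, eval_X]
        congr 1; ring
    _ ≤ |f t - P₀.eval (t : ℝ)| + |e₀ * (1 - t) + e₁ * t| := abs_sub _ _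
    _ < ε / 2 + ε / 2 := add_lt_add_of_lt_of_le (hnear t) hcorr
    _ = ε := add_halves ε

theorem stmt15 (L : C(Circle, Circle) → C(unitInterval, ℝ))
    (hlift : ∀ f, ∀ t, p (L f t) = f (α t))
    (hL0 : ∀ f, L f 0 ∈ Set.Ico (0 : ℝ) 1)
    (q : Circle) (qt : ℝ) (hqt : qt ∈ Set.Ico (0 : ℝ) 1) (hpq : p qt = q) (m : ℤ)
    (f : C(Circle, Circle)) (hfq : f 1 = q) (hW : L f 1 - L f 0 = m)
    (ε : ℝ) (hε : 0 < ε) :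
    ∃ g : C(Circle, Circle), g 1 = q ∧ L g 1 - L g 0 = m ∧
      (∃ qp : Polynomial ℝ, ∀ t : unitInterval, L g t = qp.eval (t : ℝ)) ∧
      L g 0 = qt ∧ L g 1 = qt + m ∧
      2 * π * ⨆ t, |L f t - L g t| < ε := by
  have hα0 : α 0 = 1 := by simpa [α] using p_zero
  have hLf0 : L f 0 = qt := eq_of_p_eq_of_mem_Ico (hL0 f) hqt (by rw [hlift, hα0, hfq, hpq])
  obtain ⟨P, hP0, hP1, hPnear⟩ :=
    exists_polynomial_near_of_eval_zero_of_eval_one (L f) (by positivity : 0 < ε / (4 * π))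
  rw [hLf0] at hP0
  replace hP1 : P.eval 1 = qt + m := by linarith
  obtain ⟨g, hg⟩ := exists_continuousMap_circle_comp_p P.continuous.continuousOn
    (by rw [hP0, hP1])
  have hLg0 : L g 0 = qt := eq_of_p_eq_of_mem_Ico (hL0 g) hqt <| by
    rw [hlift, hα0, ← p_zero, hg 0 ⟨le_rfl, zero_le_one⟩, hP0]
  have hLg : ∀ t, L g t = P.eval (t : ℝ) := congrFun <|
    eq_of_p_comp_eq (L g).continuous (P.continuous.comp continuous_subtype_val)
      (fun t => by rw [hlift]; exact hg t t.2) 0 (by rw [hLg0, Set.Icc.coe_zero, hP0])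
  have hLg1 : L g 1 = qt + m := by rw [hLg, Set.Icc.coe_one, hP1]
  refine ⟨g, ?_, by rw [hLg0, hLg1]; ring, ⟨P, hLg⟩, hLg0, hLg1, ?_⟩
  · rw [← p_zero, hg 0 ⟨le_rfl, zero_le_one⟩, hP0, hpq]
  · have hsup : ⨆ t, |L f t - L g t| ≤ ε / (4 * π) :=
      ciSup_le fun t => by rw [hLg]; exact (hPnear t).le
    calc 2 * π * ⨆ t, |L f t - L g t| ≤ 2 * π * (ε / (4 * π)) := by gcongr
      _ = ε / 2 := by field_simp; ring
      _ < ε := half_lt_self hε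
end
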